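/- The curvature of the Riemannian spatial connection is skew-symmetric in its last pair and in its first pair of indices: on U, (a) bar R_{il jk} + bar R_{il kj} = 0, (b) bar R_{il jk} + bar R_{li jk} = 0, and (c) bar R_{il 0k} + bar R_{li 0k} = 0, for all i, l, j, k ∈ {1,2,3} (equations (4.7a), (4.7b) and (3.4)). -/

import Mathlib

noncomputable section

/-- Points of the spacetime coordinate domain `U ⊆ ℝ⁴`. -/
abbrev Pt : Type := Fin 4 → ℝ

/-- Scalar fields on `ℝ⁴`. -/
abbrev SF : Type := Pt → ℝ

/-- Partial derivative `∂_a f` in the `x^a`-coordinate direction. -/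
def pd (a : Fin 4) (f : SF) : SF := fun x => fderiv ℝ f x (Pi.single a 1)

/-- Threading derivative `δ_i f = ∂_i f − A_i ∂_0 f`. -/
def sd (A : Fin 3 → SF) (i : Fin 3) (f : SF) : SF := fun x =>
  pd i.succ f x - A i x * pd 0 f x

/-- `A_i = −Φ⁻² ξ_i`. -/
def Acoef (Φ : SF) (ξ : Fin 3 → SF) (i : Fin 3) : SF := fun x => -(Φ x ^ 2)⁻¹ * ξ i x

/-- vorticity `ω_{ij} = ½ (δ_i A_j − δ_j A_i)`. -/
def vort (A : Fin 3 → SF) (i j : Fin 3) : SF := fun x =>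
  (1 / 2) * (sd A i (A j) x - sd A j (A i) x)

/-- `a_i = −∂_0 A_i`. -/
def aco (A : Fin 3 → SF) (i : Fin 3) : SF := fun x => -pd 0 (A i) x

/-- `c_i = Φ⁻¹ δ_i Φ`. -/
def cco (Φ : SF) (A : Fin 3 → SF) (i : Fin 3) : SF := fun x => (Φ x)⁻¹ * sd A i Φ x

/-- `b_i = a_i + c_i`. -/
def bco (Φ : SF) (A : Fin 3 → SF) (i : Fin 3) : SF := fun x => aco A i x + cco Φ A i x

/-- `Ψ = Φ⁻¹ ∂_0 Φ`. -/
def PsiF (Φ : SF) : SF := fun x => (Φ x)⁻¹ * pd 0 Φ x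

/-- inverse entries `ḡ^{ij}` of the spatial metric. -/
def ginv (gb : Fin 3 → Fin 3 → SF) (i j : Fin 3) : SF := fun x =>
  (Matrix.of fun a b => gb a b x)⁻¹ i j

/-- expansion tensor `Θ_{ij} = ½ ∂_0 ḡ_{ij}`. -/
def Th (gb : Fin 3 → Fin 3 → SF) (i j : Fin 3) : SF := fun x => (1 / 2) * pd 0 (gb i j) x

/-- expansion function `Θ = ḡ^{ij} Θ_{ij}`. -/
def ExpF (gb : Fin 3 → Fin 3 → SF) : SF := fun x => ∑ i, ∑ j, ginv gb i j x * Th gb i j x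

/-- shear `σ_{ij} = Θ_{ij} − ⅓ Θ ḡ_{ij}`. -/
def shear (gb : Fin 3 → Fin 3 → SF) (i j : Fin 3) : SF := fun x =>
  Th gb i j x - (1 / 3) * ExpF gb x * gb i j x

/-- extrinsic curvature `K_{ij} = Θ_{ij} + Φ² ω_{ij}`. -/
def Kt (Φ : SF) (A : Fin 3 → SF) (gb : Fin 3 → Fin 3 → SF) (i j : Fin 3) : SF := fun x =>
  Th gb i j x + Φ x ^ 2 * vort A i j x

/-- `K^h_i = ḡ^{hm} K_{mi}`. -/
def Km (Φ : SF) (A : Fin 3 → SF) (gb : Fin 3 → Fin 3 → SF) (h i : Fin 3) : SF := fun x =>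
  ∑ m, ginv gb h m x * Kt Φ A gb m i x

/-- coefficients `Γ̄^k_{ij}` of the Riemannian spatial connection. -/
def Gamb (A : Fin 3 → SF) (gb : Fin 3 → Fin 3 → SF) (k i j : Fin 3) : SF := fun x =>
  (1 / 2) * ∑ h, ginv gb k h x *
    (sd A i (gb h j) x + sd A j (gb h i) x - sd A h (gb i j) x)

/-- curvature `R̄^h_{i jk}` of the Riemannian spatial connection. -/
def barR (Φ : SF) (A : Fin 3 → SF) (gb : Fin 3 → Fin 3 → SF) (h i j k : Fin 3) : SF := fun x =>
  sd A k (Gamb A gb h i j) x - sd A j (Gamb A gb h i k) x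
    + (∑ l, (Gamb A gb l i j x * Gamb A gb h l k x - Gamb A gb l i k x * Gamb A gb h l j x))
    - 2 * Km Φ A gb h i x * vort A j k x

/-- spatial covariant derivative `K^h_{i|k}`. -/
def Kcov (Φ : SF) (A : Fin 3 → SF) (gb : Fin 3 → Fin 3 → SF) (h i k : Fin 3) : SF := fun x =>
  sd A k (Km Φ A gb h i) x
    + ∑ l, (Km Φ A gb l i x * Gamb A gb h l k x - Km Φ A gb h l x * Gamb A gb l i k x)

/-- mixed curvature `R̄^h_{i 0k} = K^h_{i|k} − ∂_0 Γ̄^h_{ik} + K^h_i a_k`. -/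
def barR0 (Φ : SF) (A : Fin 3 → SF) (gb : Fin 3 → Fin 3 → SF) (h i k : Fin 3) : SF := fun x =>
  Kcov Φ A gb h i k x - pd 0 (Gamb A gb h i k) x + Km Φ A gb h i x * aco A k x

/-- lowered curvature `R̄_{il jk} = ḡ_{lh} R̄^h_{i jk}`. -/
def barRlow (Φ : SF) (A : Fin 3 → SF) (gb : Fin 3 → Fin 3 → SF) (i l j k : Fin 3) : SF := fun x =>
  ∑ h, gb l h x * barR Φ A gb h i j k x

/-- lowered mixed curvature `R̄_{il 0k} = ḡ_{lh} R̄^h_{i 0k}`. -/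
def barR0low (Φ : SF) (A : Fin 3 → SF) (gb : Fin 3 → Fin 3 → SF) (i l k : Fin 3) : SF := fun x =>
  ∑ h, gb l h x * barR0 Φ A gb h i k x

/-- spatial covariant derivative `R̄^l_{h ij|k}`. -/
def barRcov (Φ : SF) (A : Fin 3 → SF) (gb : Fin 3 → Fin 3 → SF) (l h i j k : Fin 3) : SF :=
  fun x =>
  sd A k (barR Φ A gb l h i j) x
    + ∑ m, (barR Φ A gb m h i j x * Gamb A gb l m k x
        - barR Φ A gb l m i j x * Gamb A gb m h k x
        - barR Φ A gb l h m j x * Gamb A gb m i k x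
        - barR Φ A gb l h i m x * Gamb A gb m j k x)

/-- temporal covariant derivative `R̄^l_{h ij|0}`. -/
def barRcov0 (Φ : SF) (A : Fin 3 → SF) (gb : Fin 3 → Fin 3 → SF) (l h i j : Fin 3) : SF :=
  fun x =>
  pd 0 (barR Φ A gb l h i j) x
    + ∑ m, (barR Φ A gb m h i j x * Km Φ A gb l m x
        - barR Φ A gb l m i j x * Km Φ A gb m h x
        - barR Φ A gb l h m j x * Km Φ A gb m i x
        - barR Φ A gb l h i m x * Km Φ A gb m j x)

/-- spatial covariant derivative `R̄^l_{h 0i|j}`. -/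
def barR0cov (Φ : SF) (A : Fin 3 → SF) (gb : Fin 3 → Fin 3 → SF) (l h i j : Fin 3) : SF :=
  fun x =>
  sd A j (barR0 Φ A gb l h i) x
    + ∑ m, (barR0 Φ A gb m h i x * Gamb A gb l m j x
        - barR0 Φ A gb l m i x * Gamb A gb m h j x
        - barR0 Φ A gb l h m x * Gamb A gb m i j x)

/-- spatial covariant derivative `K_{ij|k}`. -/
def Ktcov (Φ : SF) (A : Fin 3 → SF) (gb : Fin 3 → Fin 3 → SF) (i j k : Fin 3) : SF := fun x =>
  sd A k (Kt Φ A gb i j) x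
    - ∑ h, (Kt Φ A gb h j x * Gamb A gb h i k x + Kt Φ A gb i h x * Gamb A gb h j k x)

/-- temporal covariant derivative `K_{ik|0}`. -/
def Ktcov0 (Φ : SF) (A : Fin 3 → SF) (gb : Fin 3 → Fin 3 → SF) (i k : Fin 3) : SF := fun x =>
  pd 0 (Kt Φ A gb i k) x
    - ∑ h, (Kt Φ A gb h k x * Km Φ A gb h i x + Kt Φ A gb i h x * Km Φ A gb h k x)

/-- spatial covariant derivative `b_{i|k} = δ_k b_i − b_h Γ̄^h_{ik}`. -/
def bcov (Φ : SF) (A : Fin 3 → SF) (gb : Fin 3 → Fin 3 → SF) (i k : Fin 3) : SF := fun x =>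
  sd A k (bco Φ A i) x - ∑ h, bco Φ A h x * Gamb A gb h i k x

/-- `σ² = ḡ^{hi} ḡ^{kj} σ_{hk} σ_{ij}`. -/
def sigma2 (gb : Fin 3 → Fin 3 → SF) : SF := fun x =>
  ∑ h, ∑ i, ∑ k, ∑ j, ginv gb h i x * ginv gb k j x * shear gb h k x * shear gb i j x

/-- `ω² = ḡ^{hi} ḡ^{kj} ω_{hk} ω_{ij}`. -/
def omega2 (A : Fin 3 → SF) (gb : Fin 3 → Fin 3 → SF) : SF := fun x =>
  ∑ h, ∑ i, ∑ k, ∑ j, ginv gb h i x * ginv gb k j x * vort A h k x * vort A i j x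

/-- `b² = ḡ^{kh} b_k b_h`. -/
def bsq (Φ : SF) (A : Fin 3 → SF) (gb : Fin 3 → Fin 3 → SF) : SF := fun x =>
  ∑ k, ∑ h, ginv gb k h x * bco Φ A k x * bco Φ A h x

/-- `b^k = ḡ^{kh} b_h`. -/
def bup (Φ : SF) (A : Fin 3 → SF) (gb : Fin 3 → Fin 3 → SF) (k : Fin 3) : SF := fun x =>
  ∑ h, ginv gb k h x * bco Φ A h x

/-- divergence `b^k_{|k} = δ_k b^k + b^l Γ̄^k_{lk}`. -/
def bdiv (Φ : SF) (A : Fin 3 → SF) (gb : Fin 3 → Fin 3 → SF) : SF := fun x =>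
  ∑ k, (sd A k (bup Φ A gb k) x + ∑ l, bup Φ A gb l x * Gamb A gb k l k x)

/-- spatial Ricci tensor `R̄_{ij} = ½(R̄^k_{i jk} + R̄^k_{j ik})`. -/
def barRic (Φ : SF) (A : Fin 3 → SF) (gb : Fin 3 → Fin 3 → SF) (i j : Fin 3) : SF := fun x =>
  (1 / 2) * ((∑ k, barR Φ A gb k i j k x) + ∑ k, barR Φ A gb k j i k x)

/-- spatial scalar curvature `R̄ = ḡ^{ij} R̄_{ij}`. -/
def barScal (Φ : SF) (A : Fin 3 → SF) (gb : Fin 3 → Fin 3 → SF) : SF := fun x =>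
  ∑ i, ∑ j, ginv gb i j x * barRic Φ A gb i j x

/-! ### 4-dimensional (spacetime) objects -/

/-- inverse entries `g^{ab}` of a spacetime metric. -/
def mginv (g : Fin 4 → Fin 4 → SF) (a b : Fin 4) : SF := fun x =>
  (Matrix.of fun c d => g c d x)⁻¹ a b

/-- Christoffel symbols `Γ^c_{ab}` of a spacetime metric. -/
def Chr (g : Fin 4 → Fin 4 → SF) (c a b : Fin 4) : SF := fun x =>
  (1 / 2) * ∑ d, mginv g c d x * (pd a (g d b) x + pd b (g d a) x - pd d (g a b) x)

/-- curvature `R^d_{c ab}` of a spacetime metric. -/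
def Riem (g : Fin 4 → Fin 4 → SF) (d c a b : Fin 4) : SF := fun x =>
  pd a (Chr g d c b) x - pd b (Chr g d c a) x
    + ∑ e, (Chr g e c b x * Chr g d e a x - Chr g e c a x * Chr g d e b x)

/-- lowered curvature `R_{dc ab} = g_{de} R^e_{c ab}`. -/
def RiemLow (g : Fin 4 → Fin 4 → SF) (d c a b : Fin 4) : SF := fun x =>
  ∑ e, g d e x * Riem g e c a b x

/-- Ricci tensor `Ric_{cb} = R^a_{c ab}`. -/
def Ricc (g : Fin 4 → Fin 4 → SF) (c b : Fin 4) : SF := fun x => ∑ a, Riem g a c a b x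

/-- scalar curvature `𝐑 = g^{ab} Ric_{ab}`. -/
def Scal (g : Fin 4 → Fin 4 → SF) : SF := fun x => ∑ a, ∑ b, mginv g a b x * Ricc g a b x

/-- Einstein tensor `G_{ab} = Ric_{ab} − ½ 𝐑 g_{ab}`. -/
def Einst (g : Fin 4 → Fin 4 → SF) (a b : Fin 4) : SF := fun x =>
  Ricc g a b x - (1 / 2) * Scal g x * g a b x

/-- the spacetime metric determined by `Φ, ξ_i, ḡ_{ij}`:
`g_{00} = −Φ²`, `g_{0i} = g_{i0} = ξ_i`, `g_{ij} = ḡ_{ij} − Φ⁻² ξ_i ξ_j`. -/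
def gmet (Φ : SF) (ξ : Fin 3 → SF) (gb : Fin 3 → Fin 3 → SF) (a b : Fin 4) : SF := fun x =>
  Fin.cases
    (Fin.cases (-(Φ x ^ 2)) (fun j => ξ j x) b)
    (fun i => Fin.cases (ξ i x) (fun j => gb i j x - (Φ x ^ 2)⁻¹ * ξ i x * ξ j x) b) a

/-- the threading frame: `e_0^a = δ^a_0`, `e_i^a = δ^a_i − A_i δ^a_0`. -/
def frameV (Φ : SF) (ξ : Fin 3 → SF) (P : Fin 4) (x : Pt) (a : Fin 4) : ℝ :=
  Fin.cases ((if a = 0 then (1 : ℝ) else 0))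
    (fun i => (if a = i.succ then (1 : ℝ) else 0)
      - Acoef Φ ξ i x * (if a = 0 then (1 : ℝ) else 0)) P

/-- frame components `R_{PQ ST} = e_Q^d e_P^c e_T^a e_S^b R_{dc ab}` of the curvature. -/
def RiemF (Φ : SF) (ξ : Fin 3 → SF) (gb : Fin 3 → Fin 3 → SF) (P Q S T : Fin 4) : SF := fun x =>
  ∑ d, ∑ c, ∑ a, ∑ b,
    frameV Φ ξ Q x d * frameV Φ ξ P x c * frameV Φ ξ T x a * frameV Φ ξ S x b *
      RiemLow (gmet Φ ξ gb) d c a b x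


/-! ### Auxiliary calculus infrastructure -/

/-- smooth at a point -/
def Sm (f : SF) (x : Pt) : Prop := ContDiffAt ℝ (⊤ : ℕ∞) f x

namespace Sm
variable {f g : SF} {x : Pt}

lemma diff (hf : Sm f x) : DifferentiableAt ℝ f x := hf.differentiableAt (by simp)
lemma const (c : ℝ) : Sm (fun _ => c) x := contDiffAt_const
lemma add (hf : Sm f x) (hg : Sm g x) : Sm (fun y => f y + g y) x := ContDiffAt.add hf hg
lemma sub (hf : Sm f x) (hg : Sm g x) : Sm (fun y => f y - g y) x := ContDiffAt.sub hf hg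
lemma mul (hf : Sm f x) (hg : Sm g x) : Sm (fun y => f y * g y) x := ContDiffAt.mul hf hg
lemma neg (hf : Sm f x) : Sm (fun y => -f y) x := ContDiffAt.neg hf
lemma inv (hf : Sm f x) (h0 : f x ≠ 0) : Sm (fun y => (f y)⁻¹) x := ContDiffAt.inv hf h0
lemma pow (hf : Sm f x) (n : ℕ) : Sm (fun y => f y ^ n) x := ContDiffAt.pow hf n
lemma cmul (c : ℝ) (hf : Sm f x) : Sm (fun y => c * f y) x := (const c).mul hf

lemma sum {ι : Type*} (s : Finset ι) {F : ι → SF} (hF : ∀ i ∈ s, Sm (F i) x) :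
    Sm (fun y => ∑ i ∈ s, F i y) x := ContDiffAt.sum hF

lemma pd (hf : Sm f x) (a : Fin 4) : Sm (pd a f) x := by
  have h1 : ContDiffAt ℝ (⊤ : ℕ∞) (fderiv ℝ f) x := hf.fderiv_right (by exact (by simp))
  exact h1.clm_apply contDiffAt_const

end Sm

lemma pd_congr {f g : SF} {x : Pt} (a : Fin 4) (h : f =ᶠ[nhds x] g) : pd a f x = pd a g x := by
  simp only [pd, h.fderiv_eq]

lemma pd_add {f g : SF} {x : Pt} (a : Fin 4) (hf : DifferentiableAt ℝ f x)
    (hg : DifferentiableAt ℝ g x) :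
    pd a (fun y => f y + g y) x = pd a f x + pd a g x := by
  simp only [pd]; rw [fderiv_fun_add hf hg]; simp

lemma pd_sub {f g : SF} {x : Pt} (a : Fin 4) (hf : DifferentiableAt ℝ f x)
    (hg : DifferentiableAt ℝ g x) :
    pd a (fun y => f y - g y) x = pd a f x - pd a g x := by
  simp only [pd]; rw [fderiv_fun_sub hf hg]; simp

lemma pd_mul {f g : SF} {x : Pt} (a : Fin 4) (hf : DifferentiableAt ℝ f x)
    (hg : DifferentiableAt ℝ g x) :
    pd a (fun y => f y * g y) x = pd a f x * g x + f x * pd a g x := by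
  simp only [pd]; rw [fderiv_fun_mul hf hg]; simp; ring

lemma pd_sum {ι : Type*} {x : Pt} (a : Fin 4) (s : Finset ι) {F : ι → SF}
    (hF : ∀ i ∈ s, DifferentiableAt ℝ (F i) x) :
    pd a (fun y => ∑ i ∈ s, F i y) x = ∑ i ∈ s, pd a (F i) x := by
  simp only [pd]; rw [fderiv_fun_sum hF]; simp

lemma pd_comm {f : SF} {x : Pt} (a b : Fin 4) (hf : Sm f x) :
    pd a (pd b f) x = pd b (pd a f) x := by
  have hsym := (hf.isSymmSndFDerivAt (by rw [minSmoothness_of_isRCLikeNormedField]; exact (WithTop.coe_le_coe.mpr le_top))) (Pi.single b 1) (Pi.single a 1)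
  have hd : DifferentiableAt ℝ (fderiv ℝ f) x :=
    (hf.fderiv_right (m := (⊤ : ℕ∞)) (n := (⊤ : ℕ∞)) (by simp)).differentiableAt (by simp)
  have e : ∀ c d : Fin 4, pd c (pd d f) x
      = fderiv ℝ (fderiv ℝ f) x (Pi.single c 1) (Pi.single d 1) := by
    intro c d
    show fderiv ℝ (fun y => fderiv ℝ f y (Pi.single d 1)) x (Pi.single c 1) = _
    rw [fderiv_clm_apply hd (differentiableAt_const _)]
    simp
  rw [e, e]
  exact hsym.symm

/-! ### sd calculus -/

lemma sd_congr {A : Fin 3 → SF} {f g : SF} {x : Pt} (i : Fin 3) (h : f =ᶠ[nhds x] g) :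
    sd A i f x = sd A i g x := by
  simp only [sd]; rw [pd_congr _ h, pd_congr _ h]

lemma sd_add {A : Fin 3 → SF} {f g : SF} {x : Pt} (i : Fin 3) (hf : DifferentiableAt ℝ f x)
    (hg : DifferentiableAt ℝ g x) :
    sd A i (fun y => f y + g y) x = sd A i f x + sd A i g x := by
  simp only [sd, pd_add _ hf hg]; ring

lemma sd_mul {A : Fin 3 → SF} {f g : SF} {x : Pt} (i : Fin 3) (hf : DifferentiableAt ℝ f x)
    (hg : DifferentiableAt ℝ g x) :
    sd A i (fun y => f y * g y) x = sd A i f x * g x + f x * sd A i g x := by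
  simp only [sd, pd_mul _ hf hg]; ring

lemma sd_sum {ι : Type*} {A : Fin 3 → SF} {x : Pt} (i : Fin 3) (s : Finset ι) {F : ι → SF}
    (hF : ∀ m ∈ s, DifferentiableAt ℝ (F m) x) :
    sd A i (fun y => ∑ m ∈ s, F m y) x = ∑ m ∈ s, sd A i (F m) x := by
  simp only [sd, pd_sum _ s hF]
  rw [Finset.mul_sum, ← Finset.sum_sub_distrib]

lemma Sm_sd {A : Fin 3 → SF} {f : SF} {x : Pt} {i : Fin 3} (hA : Sm (A i) x) (hf : Sm f x) :
    Sm (sd A i f) x := (hf.pd _).sub (hA.mul (hf.pd 0))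

lemma pd_sd_exp {A : Fin 3 → SF} {f : SF} {x : Pt} (a : Fin 4) (r : Fin 3)
    (hAr : Sm (A r) x) (hf : Sm f x) :
    pd a (sd A r f) x
      = pd a (pd r.succ f) x - (pd a (A r) x * pd 0 f x + A r x * pd a (pd 0 f) x) := by
  have h0 : pd a (sd A r f) x = pd a (fun y => pd r.succ f y - A r y * pd 0 f y) x := rfl
  rw [h0, pd_sub a ((hf.pd _).diff) ((hAr.mul (hf.pd 0)).diff),
    pd_mul a hAr.diff ((hf.pd 0).diff)]

lemma sd_sd_comm {A : Fin 3 → SF} {f : SF} {x : Pt} (p q : Fin 3)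
    (hAp : Sm (A p) x) (hAq : Sm (A q) x) (hf : Sm f x) :
    sd A p (sd A q f) x - sd A q (sd A p f) x = -2 * vort A p q x * pd 0 f x := by
  have e1 : sd A p (sd A q f) x = pd p.succ (sd A q f) x - A p x * pd 0 (sd A q f) x := rfl
  have e2 : sd A q (sd A p f) x = pd q.succ (sd A p f) x - A q x * pd 0 (sd A p f) x := rfl
  rw [e1, e2, pd_sd_exp p.succ q hAq hf, pd_sd_exp 0 q hAq hf,
    pd_sd_exp q.succ p hAp hf, pd_sd_exp 0 p hAp hf]
  simp only [vort, sd]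
  rw [pd_comm 0 q.succ hf, pd_comm 0 p.succ hf, pd_comm p.succ q.succ hf]
  ring

lemma sd_pd0_comm {A : Fin 3 → SF} {f : SF} {x : Pt} (k : Fin 3)
    (hAk : Sm (A k) x) (hf : Sm f x) :
    sd A k (pd 0 f) x - pd 0 (sd A k f) x = pd 0 (A k) x * pd 0 f x := by
  have e1 : sd A k (pd 0 f) x = pd k.succ (pd 0 f) x - A k x * pd 0 (pd 0 f) x := rfl
  rw [e1, pd_sd_exp 0 k hAk hf, pd_comm 0 k.succ hf]
  ring

/-! ### matrix layer -/

lemma Sm_adj {g : Fin 3 → Fin 3 → SF} {y : Pt} (h : ∀ c d, Sm (g c d) y) (a b : Fin 3) :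
    Sm (fun z => (Matrix.of fun c d => g c d z).adjugate a b) y := by
  have e : (fun z => (Matrix.of fun c d => g c d z).adjugate a b)
      = fun z => (!![g 1 1 z * g 2 2 z - g 1 2 z * g 2 1 z,
      -(g 0 1 z * g 2 2 z) + g 0 2 z * g 2 1 z,
      g 0 1 z * g 1 2 z - g 0 2 z * g 1 1 z;
      -(g 1 0 z * g 2 2 z) + g 1 2 z * g 2 0 z,
      g 0 0 z * g 2 2 z - g 0 2 z * g 2 0 z,
      -(g 0 0 z * g 1 2 z) + g 0 2 z * g 1 0 z;
      g 1 0 z * g 2 1 z - g 1 1 z * g 2 0 z,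
      -(g 0 0 z * g 2 1 z) + g 0 1 z * g 2 0 z,
      g 0 0 z * g 1 1 z - g 0 1 z * g 1 0 z] : Matrix (Fin 3) (Fin 3) ℝ) a b := by
    funext z; rw [Matrix.adjugate_fin_three]; rfl
  rw [e]
  fin_cases a <;> fin_cases b <;>
    simp only [Matrix.cons_val', Matrix.cons_val_zero, Matrix.cons_val_one, Matrix.head_cons,
      Matrix.empty_val', Matrix.cons_val_fin_one, Matrix.head_fin_const, Matrix.cons_val_two,
      Matrix.tail_cons, Fin.isValue] <;>
    first
      | exact ContDiffAt.sub (ContDiffAt.mul (h _ _) (h _ _)) (ContDiffAt.mul (h _ _) (h _ _))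
      | exact ContDiffAt.add (ContDiffAt.neg (ContDiffAt.mul (h _ _) (h _ _)))
          (ContDiffAt.mul (h _ _) (h _ _))

lemma Sm_det {g : Fin 3 → Fin 3 → SF} {y : Pt} (h : ∀ c d, Sm (g c d) y) :
    Sm (fun z => (Matrix.of fun c d => g c d z).det) y := by
  have e : (fun z => (Matrix.of fun c d => g c d z).det)
      = fun z => g 0 0 z * g 1 1 z * g 2 2 z - g 0 0 z * g 1 2 z * g 2 1 z
        - g 0 1 z * g 1 0 z * g 2 2 z + g 0 1 z * g 1 2 z * g 2 0 z
        + g 0 2 z * g 1 0 z * g 2 1 z - g 0 2 z * g 1 1 z * g 2 0 z := by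
    funext z; rw [Matrix.det_fin_three]; rfl
  rw [e]
  exact (((((((h _ _).mul (h _ _)).mul (h _ _)).sub (((h _ _).mul (h _ _)).mul (h _ _))).sub
    (((h _ _).mul (h _ _)).mul (h _ _))).add (((h _ _).mul (h _ _)).mul (h _ _))).add
    (((h _ _).mul (h _ _)).mul (h _ _))).sub (((h _ _).mul (h _ _)).mul (h _ _))

lemma Sm_ginv {g : Fin 3 → Fin 3 → SF} {y : Pt} (h : ∀ c d, Sm (g c d) y)
    (hdet : (Matrix.of fun c d => g c d y).det ≠ 0) (a b : Fin 3) :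
    Sm (ginv g a b) y := by
  have e : ginv g a b = fun z => ((Matrix.of fun c d => g c d z).det)⁻¹
      * (Matrix.of fun c d => g c d z).adjugate a b := by
    funext z
    rw [ginv, Matrix.inv_def, Matrix.smul_apply, Ring.inverse_eq_inv, smul_eq_mul]
  rw [e]
  exact ((Sm_det h).inv hdet).mul (Sm_adj h a b)

/-! ### Finset contraction lemmas -/

lemma swap_mul_sum (a b : Fin 3 → ℝ) (c : Fin 3 → Fin 3 → ℝ) :
    ∑ h, a h * ∑ m, b m * c m h = ∑ m, b m * ∑ h, a h * c m h := by
  simp_rw [Finset.mul_sum]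
  rw [Finset.sum_comm]
  exact Finset.sum_congr rfl fun m _ => Finset.sum_congr rfl fun h _ => by ring

lemma contract {gb : Fin 3 → Fin 3 → SF} {y : Pt}
    (hMul : ∀ p q : Fin 3, ∑ h, gb p h y * ginv gb h q y = if p = q then (1:ℝ) else 0)
    (w : Fin 3 → ℝ) (p : Fin 3) :
    ∑ h, gb p h y * ∑ m, ginv gb h m y * w m = w p := by
  simp_rw [Finset.mul_sum, ← mul_assoc]
  rw [Finset.sum_comm]
  have h1 : ∀ m, ∑ h, gb p h y * ginv gb h m y * w m
      = (if p = m then (1:ℝ) else 0) * w m := by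
    intro m; rw [← Finset.sum_mul, hMul]
  rw [Finset.sum_congr rfl fun m _ => h1 m]
  simp

/-- lowered Christoffel symbols. -/
def Glow (A : Fin 3 → SF) (gb : Fin 3 → Fin 3 → SF) (l i j : Fin 3) : SF := fun x =>
  (1 / 2) * (sd A i (gb l j) x + sd A j (gb l i) x - sd A l (gb i j) x)

/-- equations (4.7a), (4.7b), (3.4): the lowered curvature of the
Riemannian spatial connection is skew-symmetric in its last pair and in its first pair
of indices, and the lowered mixed curvature is skew-symmetric in its first pair. -/
theorem stmt_5 (U : Set Pt) (hU : IsOpen U)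
    (Φ : SF) (ξ : Fin 3 → SF) (gb : Fin 3 → Fin 3 → SF)
    (hΦ : ContDiffOn ℝ (⊤ : ℕ∞) Φ U) (hΦ0 : ∀ x ∈ U, Φ x ≠ 0)
    (hξ : ∀ i, ContDiffOn ℝ (⊤ : ℕ∞) (ξ i) U)
    (hgb : ∀ i j, ContDiffOn ℝ (⊤ : ℕ∞) (gb i j) U)
    (hpos : ∀ x ∈ U, (Matrix.of fun i j => gb i j x).PosDef) :
    ∀ x ∈ U, ∀ i l j k : Fin 3,
      barRlow Φ (Acoef Φ ξ) gb i l j k x + barRlow Φ (Acoef Φ ξ) gb i l k j x = 0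
      ∧ barRlow Φ (Acoef Φ ξ) gb i l j k x + barRlow Φ (Acoef Φ ξ) gb l i j k x = 0
      ∧ barR0low Φ (Acoef Φ ξ) gb i l k x + barR0low Φ (Acoef Φ ξ) gb l i k x = 0 := by
  intro x hx i l j k
  set A := Acoef Φ ξ with hAdef
  have hmem : ∀ y ∈ U, U ∈ nhds y := fun y hy => hU.mem_nhds hy
  have hSg : ∀ (a b : Fin 3), ∀ y ∈ U, Sm (gb a b) y := fun a b y hy =>
    (hgb a b).contDiffAt (hmem y hy)
  have hSPhi : ∀ y ∈ U, Sm Φ y := fun y hy => hΦ.contDiffAt (hmem y hy)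
  have hSxi : ∀ (m : Fin 3), ∀ y ∈ U, Sm (ξ m) y := fun m y hy =>
    (hξ m).contDiffAt (hmem y hy)
  have hSA : ∀ (m : Fin 3), ∀ y ∈ U, Sm (A m) y := by
    intro m y hy
    exact ((((hSPhi y hy).pow 2).inv (pow_ne_zero 2 (hΦ0 y hy))).neg).mul (hSxi m y hy)
  have hdet : ∀ y ∈ U, (Matrix.of fun a b => gb a b y).det ≠ 0 := fun y hy =>
    ne_of_gt (hpos y hy).det_pos
  have hSG : ∀ (a b : Fin 3), ∀ y ∈ U, Sm (ginv gb a b) y := fun a b y hy =>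
    Sm_ginv (fun c d => hSg c d y hy) (hdet y hy) a b
  have hMul : ∀ y ∈ U, ∀ p q : Fin 3,
      ∑ h, gb p h y * ginv gb h q y = if p = q then (1:ℝ) else 0 := by
    intro y hy p q
    have h1 := Matrix.mul_nonsing_inv (Matrix.of fun a b => gb a b y)
      (isUnit_iff_ne_zero.mpr (hdet y hy))
    have h2 := congrFun (congrFun h1 p) q
    simpa [Matrix.mul_apply, Matrix.one_apply, ginv, Matrix.of_apply] using h2
  have hgs : ∀ (a b : Fin 3), ∀ y ∈ U, gb a b y = gb b a y := by
    intro a b y hy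
    have h2 := (hpos y hy).1.apply a b
    simpa using h2.symm
  have hpdgs : ∀ (c : Fin 4) (a b : Fin 3), ∀ y ∈ U, pd c (gb a b) y = pd c (gb b a) y :=
    fun c a b y hy => pd_congr c (Filter.eventuallyEq_of_mem (hmem y hy) fun z hz => hgs a b z hz)
  have hsdgs : ∀ (m a b : Fin 3), ∀ y ∈ U, sd A m (gb a b) y = sd A m (gb b a) y :=
    fun m a b y hy => sd_congr m (Filter.eventuallyEq_of_mem (hmem y hy) fun z hz => hgs a b z hz)
  have hSsdg : ∀ (m a b : Fin 3), ∀ y ∈ U, Sm (sd A m (gb a b)) y := fun m a b y hy =>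
    Sm_sd (hSA m y hy) (hSg a b y hy)
  have hSGam : ∀ (c a b : Fin 3), ∀ y ∈ U, Sm (Gamb A gb c a b) y := by
    intro c a b y hy
    exact Sm.cmul _ (Sm.sum _ fun h _ => (hSG c h y hy).mul
      (((hSsdg a h b y hy).add (hSsdg b h a y hy)).sub (hSsdg h a b y hy)))
  have hSvort : ∀ (a b : Fin 3), ∀ y ∈ U, Sm (vort A a b) y := fun a b y hy =>
    Sm.cmul _ ((Sm_sd (hSA a y hy) (hSA b y hy)).sub (Sm_sd (hSA b y hy) (hSA a y hy)))
  have hSKt : ∀ (a b : Fin 3), ∀ y ∈ U, Sm (Kt Φ A gb a b) y := fun a b y hy =>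
    (Sm.cmul _ ((hSg a b y hy).pd 0)).add (((hSPhi y hy).pow 2).mul (hSvort a b y hy))
  have hSKm : ∀ (a b : Fin 3), ∀ y ∈ U, Sm (Km Φ A gb a b) y := fun a b y hy =>
    Sm.sum _ fun m _ => (hSG a m y hy).mul (hSKt m b y hy)
  have hSGlow : ∀ (p a b : Fin 3), ∀ y ∈ U, Sm (Glow A gb p a b) y := fun p a b y hy =>
    Sm.cmul _ (((hSsdg a p b y hy).add (hSsdg b p a y hy)).sub (hSsdg p a b y hy))
  -- pointwise identities on U
  have E1 : ∀ y ∈ U, ∀ p a b : Fin 3,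
      ∑ h, gb p h y * Gamb A gb h a b y = Glow A gb p a b y := by
    intro y hy p a b
    calc ∑ h, gb p h y * Gamb A gb h a b y
        = ∑ h, gb p h y * ((1/2) * ∑ m, ginv gb h m y *
            (sd A a (gb m b) y + sd A b (gb m a) y - sd A m (gb a b) y)) := rfl
      _ = (1/2) * ∑ h, gb p h y * ∑ m, ginv gb h m y *
            (sd A a (gb m b) y + sd A b (gb m a) y - sd A m (gb a b) y) := by
          rw [Finset.mul_sum]
          exact Finset.sum_congr rfl fun h _ => by ring
      _ = (1/2) * (sd A a (gb p b) y + sd A b (gb p a) y - sd A p (gb a b) y) := by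
          rw [contract (hMul y hy)]
      _ = Glow A gb p a b y := rfl
  have E5 : ∀ y ∈ U, ∀ p q : Fin 3,
      ∑ h, gb p h y * Km Φ A gb h q y = Kt Φ A gb p q y := fun y hy p q =>
    contract (hMul y hy) (fun m => Kt Φ A gb m q y) p
  have E2 : ∀ y ∈ U, ∀ p q m : Fin 3,
      sd A m (gb p q) y = Glow A gb p q m y + Glow A gb q p m y := by
    intro y hy p q m
    simp only [Glow]
    rw [hsdgs m q p y hy]
    ring
  have E6 : ∀ y ∈ U, ∀ p q : Fin 3,
      Kt Φ A gb p q y + Kt Φ A gb q p y = pd 0 (gb p q) y := by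
    intro y hy p q
    simp only [Kt, Th, vort]
    rw [hpdgs 0 q p y hy]
    ring
  have E3 : ∀ y ∈ U, ∀ p q a b : Fin 3,
      ∑ h, Glow A gb h p q y * Gamb A gb h a b y
        = ∑ h, Glow A gb h a b y * Gamb A gb h p q y := by
    intro y hy p q a b
    calc ∑ h, Glow A gb h p q y * Gamb A gb h a b y
        = ∑ h, (∑ m, gb h m y * Gamb A gb m p q y) * Gamb A gb h a b y :=
          Finset.sum_congr rfl fun h _ => by rw [E1 y hy h p q]
      _ = ∑ h, ∑ m, gb h m y * Gamb A gb m p q y * Gamb A gb h a b y :=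
          Finset.sum_congr rfl fun h _ => Finset.sum_mul _ _ _
      _ = ∑ m, ∑ h, gb h m y * Gamb A gb m p q y * Gamb A gb h a b y := Finset.sum_comm
      _ = ∑ m, (∑ h, gb m h y * Gamb A gb h a b y) * Gamb A gb m p q y := by
          refine Finset.sum_congr rfl fun m _ => ?_
          rw [Finset.sum_mul]
          refine Finset.sum_congr rfl fun h _ => ?_
          rw [hgs h m y hy]; ring
      _ = ∑ m, Glow A gb m a b y * Gamb A gb m p q y :=
          Finset.sum_congr rfl fun m _ => by rw [E1 y hy m a b]
  have E8 : ∀ y ∈ U, ∀ p q r : Fin 3,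
      ∑ h, Glow A gb h p q y * Km Φ A gb h r y
        = ∑ m, Kt Φ A gb m r y * Gamb A gb m p q y := by
    intro y hy p q r
    calc ∑ h, Glow A gb h p q y * Km Φ A gb h r y
        = ∑ h, (∑ m, gb h m y * Gamb A gb m p q y) * Km Φ A gb h r y :=
          Finset.sum_congr rfl fun h _ => by rw [E1 y hy h p q]
      _ = ∑ h, ∑ m, gb h m y * Gamb A gb m p q y * Km Φ A gb h r y :=
          Finset.sum_congr rfl fun h _ => Finset.sum_mul _ _ _
      _ = ∑ m, ∑ h, gb h m y * Gamb A gb m p q y * Km Φ A gb h r y := Finset.sum_comm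
      _ = ∑ m, (∑ h, gb m h y * Km Φ A gb h r y) * Gamb A gb m p q y := by
          refine Finset.sum_congr rfl fun m _ => ?_
          rw [Finset.sum_mul]
          refine Finset.sum_congr rfl fun h _ => ?_
          rw [hgs h m y hy]; ring
      _ = ∑ m, Kt Φ A gb m r y * Gamb A gb m p q y :=
          Finset.sum_congr rfl fun m _ => by rw [E5 y hy m r]
  -- eventually-equal versions
  have nE1 : ∀ p a b : Fin 3,
      (fun y => ∑ h, gb p h y * Gamb A gb h a b y) =ᶠ[nhds x] Glow A gb p a b := fun p a b =>
    Filter.eventuallyEq_of_mem (hmem x hx) fun z hz => E1 z hz p a b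
  have nE5 : ∀ p q : Fin 3,
      (fun y => ∑ h, gb p h y * Km Φ A gb h q y) =ᶠ[nhds x] Kt Φ A gb p q := fun p q =>
    Filter.eventuallyEq_of_mem (hmem x hx) fun z hz => E5 z hz p q
  have nE2 : ∀ p q m : Fin 3,
      (fun y => Glow A gb p q m y + Glow A gb q p m y) =ᶠ[nhds x] sd A m (gb p q) := fun p q m =>
    Filter.eventuallyEq_of_mem (hmem x hx) fun z hz => (E2 z hz p q m).symm
  have nE6 : ∀ p q : Fin 3,
      (fun y => Kt Φ A gb p q y + Kt Φ A gb q p y) =ᶠ[nhds x] pd 0 (gb p q) := fun p q =>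
    Filter.eventuallyEq_of_mem (hmem x hx) fun z hz => E6 z hz p q
  -- derivative expansion lemmas at x
  have F1 : ∀ m p a b : Fin 3,
      sd A m (Glow A gb p a b) x
        = ∑ h, sd A m (gb p h) x * Gamb A gb h a b x
          + ∑ h, gb p h x * sd A m (Gamb A gb h a b) x := by
    intro m p a b
    rw [← sd_congr m (nE1 p a b),
      sd_sum m Finset.univ (fun h _ => ((hSg p h x hx).mul (hSGam h a b x hx)).diff),
      Finset.sum_congr rfl (fun h _ => sd_mul m (hSg p h x hx).diff (hSGam h a b x hx).diff),
      Finset.sum_add_distrib]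
  have F2 : ∀ p a b : Fin 3,
      pd 0 (Glow A gb p a b) x
        = ∑ h, pd 0 (gb p h) x * Gamb A gb h a b x
          + ∑ h, gb p h x * pd 0 (Gamb A gb h a b) x := by
    intro p a b
    rw [← pd_congr 0 (nE1 p a b),
      pd_sum 0 Finset.univ (fun h _ => ((hSg p h x hx).mul (hSGam h a b x hx)).diff),
      Finset.sum_congr rfl (fun h _ => pd_mul 0 (hSg p h x hx).diff (hSGam h a b x hx).diff),
      Finset.sum_add_distrib]
  have F3 : ∀ m p q : Fin 3,
      sd A m (Kt Φ A gb p q) x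
        = ∑ h, sd A m (gb p h) x * Km Φ A gb h q x
          + ∑ h, gb p h x * sd A m (Km Φ A gb h q) x := by
    intro m p q
    rw [← sd_congr m (nE5 p q),
      sd_sum m Finset.univ (fun h _ => ((hSg p h x hx).mul (hSKm h q x hx)).diff),
      Finset.sum_congr rfl (fun h _ => sd_mul m (hSg p h x hx).diff (hSKm h q x hx).diff),
      Finset.sum_add_distrib]
  -- ### part (a)
  have ha : barRlow Φ A gb i l j k x + barRlow Φ A gb i l k j x = 0 := by
    show (∑ h, gb l h x * barR Φ A gb h i j k x) + (∑ h, gb l h x * barR Φ A gb h i k j x) = 0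
    rw [← Finset.sum_add_distrib]
    apply Finset.sum_eq_zero
    intro h _
    have hz : barR Φ A gb h i j k x + barR Φ A gb h i k j x = 0 := by
      have hS : ∑ m, (Gamb A gb m i j x * Gamb A gb h m k x
            - Gamb A gb m i k x * Gamb A gb h m j x)
          + ∑ m, (Gamb A gb m i k x * Gamb A gb h m j x
            - Gamb A gb m i j x * Gamb A gb h m k x) = 0 := by
        rw [← Finset.sum_add_distrib]
        exact Finset.sum_eq_zero fun m _ => by ring
      have hv : vort A j k x + vort A k j x = 0 := by simp only [vort]; ring
      simp only [barR]
      linear_combination hS - 2 * Km Φ A gb h i x * hv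
    linear_combination gb l h x * hz
  -- ### part (b)
  have HB : ∀ p q : Fin 3, barRlow Φ A gb p q j k x
      = sd A k (Glow A gb q p j) x - sd A j (Glow A gb q p k) x
        - ∑ h, Glow A gb h q k x * Gamb A gb h p j x
        + ∑ h, Glow A gb h q j x * Gamb A gb h p k x
        - 2 * Kt Φ A gb q p x * vort A j k x := by
    intro p q
    have e0 : barRlow Φ A gb p q j k x
        = (∑ h, gb q h x * sd A k (Gamb A gb h p j) x)
          - (∑ h, gb q h x * sd A j (Gamb A gb h p k) x)
          + ((∑ h, gb q h x * ∑ m, Gamb A gb m p j x * Gamb A gb h m k x)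
             - (∑ h, gb q h x * ∑ m, Gamb A gb m p k x * Gamb A gb h m j x))
          - (∑ h, gb q h x * (2 * Km Φ A gb h p x * vort A j k x)) := by
      show ∑ h, gb q h x * (sd A k (Gamb A gb h p j) x - sd A j (Gamb A gb h p k) x
          + (∑ m, (Gamb A gb m p j x * Gamb A gb h m k x
              - Gamb A gb m p k x * Gamb A gb h m j x))
          - 2 * Km Φ A gb h p x * vort A j k x) = _
      simp only [Finset.sum_sub_distrib, mul_add, mul_sub, Finset.sum_add_distrib]
    have t1 := F1 k q p j
    have t2 := F1 j q p k
    have t3a : ∑ h, gb q h x * ∑ m, Gamb A gb m p j x * Gamb A gb h m k x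
        = ∑ h, Glow A gb q h k x * Gamb A gb h p j x := by
      rw [swap_mul_sum]
      exact Finset.sum_congr rfl fun m _ => by rw [E1 x hx q m k]; ring
    have t3b : ∑ h, gb q h x * ∑ m, Gamb A gb m p k x * Gamb A gb h m j x
        = ∑ h, Glow A gb q h j x * Gamb A gb h p k x := by
      rw [swap_mul_sum]
      exact Finset.sum_congr rfl fun m _ => by rw [E1 x hx q m j]; ring
    have t4 : ∑ h, gb q h x * (2 * Km Φ A gb h p x * vort A j k x)
        = 2 * Kt Φ A gb q p x * vort A j k x := by
      rw [Finset.sum_congr rfl fun h _ =>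
        show gb q h x * (2 * Km Φ A gb h p x * vort A j k x)
          = gb q h x * Km Φ A gb h p x * (2 * vort A j k x) from by ring,
        ← Finset.sum_mul, E5 x hx q p]
      ring
    have t5 : ∀ aa bb : Fin 3, ∀ m : Fin 3, ∑ h, sd A m (gb q h) x * Gamb A gb h aa bb x
        = ∑ h, Glow A gb q h m x * Gamb A gb h aa bb x
          + ∑ h, Glow A gb h q m x * Gamb A gb h aa bb x := by
      intro aa bb m
      rw [← Finset.sum_add_distrib]
      exact Finset.sum_congr rfl fun h _ => by rw [E2 x hx q h m]; ring
    rw [e0, t3a, t3b, t4]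
    linear_combination t2 - t1 + t5 p k j - t5 p j k
  have hb : barRlow Φ A gb i l j k x + barRlow Φ A gb l i j k x = 0 := by
    rw [HB i l, HB l i]
    have c1 : sd A k (Glow A gb l i j) x + sd A k (Glow A gb i l j) x
        = sd A k (sd A j (gb l i)) x := by
      rw [← sd_add k (hSGlow l i j x hx).diff (hSGlow i l j x hx).diff]
      exact sd_congr k (nE2 l i j)
    have c2 : sd A j (Glow A gb l i k) x + sd A j (Glow A gb i l k) x
        = sd A j (sd A k (gb l i)) x := by
      rw [← sd_add j (hSGlow l i k x hx).diff (hSGlow i l k x hx).diff]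
      exact sd_congr j (nE2 l i k)
    have c3 := E3 x hx l k i j
    have c4 := E3 x hx l j i k
    have c5 := sd_sd_comm k j (hSA k x hx) (hSA j x hx) (hSg l i x hx)
    have c6 := E6 x hx l i
    have c7 : vort A k j x = -vort A j k x := by simp only [vort]; ring
    linear_combination c1 - c2 - c3 + c4 + c5 - 2 * vort A j k x * c6
      - 2 * pd 0 (gb l i) x * c7
  -- ### part (c)
  have HB0 : ∀ p q : Fin 3, barR0low Φ A gb p q k x
      = sd A k (Kt Φ A gb q p) x
        - ∑ h, Glow A gb h q k x * Km Φ A gb h p x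
        - ∑ m, Kt Φ A gb q m x * Gamb A gb m p k x
        - pd 0 (Glow A gb q p k) x
        + ∑ h, pd 0 (gb q h) x * Gamb A gb h p k x
        + Kt Φ A gb q p x * aco A k x := by
    intro p q
    have e0 : barR0low Φ A gb p q k x
        = (∑ h, gb q h x * sd A k (Km Φ A gb h p) x)
          + ((∑ h, gb q h x * ∑ m, Km Φ A gb m p x * Gamb A gb h m k x)
             - (∑ h, gb q h x * ∑ m, Km Φ A gb h m x * Gamb A gb m p k x))
          - (∑ h, gb q h x * pd 0 (Gamb A gb h p k) x)
          + (∑ h, gb q h x * (Km Φ A gb h p x * aco A k x)) := by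
      show ∑ h, gb q h x * ((sd A k (Km Φ A gb h p) x
          + ∑ m, (Km Φ A gb m p x * Gamb A gb h m k x - Km Φ A gb h m x * Gamb A gb m p k x))
          - pd 0 (Gamb A gb h p k) x + Km Φ A gb h p x * aco A k x) = _
      simp only [Finset.sum_sub_distrib, mul_add, mul_sub, Finset.sum_add_distrib]
    have t1 := F3 k q p
    have t1' : ∑ h, sd A k (gb q h) x * Km Φ A gb h p x
        = ∑ h, Glow A gb q h k x * Km Φ A gb h p x
          + ∑ h, Glow A gb h q k x * Km Φ A gb h p x := by
      rw [← Finset.sum_add_distrib]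
      exact Finset.sum_congr rfl fun h _ => by rw [E2 x hx q h k]; ring
    have t2 : ∑ h, gb q h x * ∑ m, Km Φ A gb m p x * Gamb A gb h m k x
        = ∑ h, Glow A gb q h k x * Km Φ A gb h p x := by
      rw [swap_mul_sum]
      exact Finset.sum_congr rfl fun m _ => by rw [E1 x hx q m k]; ring
    have t3 : ∑ h, gb q h x * ∑ m, Km Φ A gb h m x * Gamb A gb m p k x
        = ∑ m, Kt Φ A gb q m x * Gamb A gb m p k x := by
      simp_rw [Finset.mul_sum, ← mul_assoc]
      rw [Finset.sum_comm]
      refine Finset.sum_congr rfl fun m _ => ?_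
      rw [Finset.sum_congr rfl fun h _ =>
        show gb q h x * Km Φ A gb h m x * Gamb A gb m p k x
          = gb q h x * Km Φ A gb h m x * Gamb A gb m p k x from rfl,
        ← Finset.sum_mul, E5 x hx q m]
    have t4 := F2 q p k
    have t5 : ∑ h, gb q h x * (Km Φ A gb h p x * aco A k x)
        = Kt Φ A gb q p x * aco A k x := by
      rw [Finset.sum_congr rfl fun h _ =>
        show gb q h x * (Km Φ A gb h p x * aco A k x)
          = gb q h x * Km Φ A gb h p x * aco A k x from by ring,
        ← Finset.sum_mul, E5 x hx q p]
    rw [e0, t2, t3, t5]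
    linear_combination t4 - t1 - t1'
  have hc : barR0low Φ A gb i l k x + barR0low Φ A gb l i k x = 0 := by
    rw [HB0 i l, HB0 l i]
    have d1 : sd A k (Kt Φ A gb l i) x + sd A k (Kt Φ A gb i l) x
        = sd A k (pd 0 (gb l i)) x := by
      rw [← sd_add k (hSKt l i x hx).diff (hSKt i l x hx).diff]
      exact sd_congr k (nE6 l i)
    have d2 := E8 x hx l k i
    have d2' := E8 x hx i k l
    have d3 : ∑ m, Kt Φ A gb l m x * Gamb A gb m i k x
        + ∑ m, Kt Φ A gb m l x * Gamb A gb m i k x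
        = ∑ m, pd 0 (gb l m) x * Gamb A gb m i k x := by
      rw [← Finset.sum_add_distrib]
      exact Finset.sum_congr rfl fun m _ => by rw [← add_mul, E6 x hx l m]
    have d3' : ∑ m, Kt Φ A gb i m x * Gamb A gb m l k x
        + ∑ m, Kt Φ A gb m i x * Gamb A gb m l k x
        = ∑ m, pd 0 (gb i m) x * Gamb A gb m l k x := by
      rw [← Finset.sum_add_distrib]
      exact Finset.sum_congr rfl fun m _ => by rw [← add_mul, E6 x hx i m]
    have d4 : pd 0 (Glow A gb l i k) x + pd 0 (Glow A gb i l k) x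
        = pd 0 (sd A k (gb l i)) x := by
      rw [← pd_add 0 (hSGlow l i k x hx).diff (hSGlow i l k x hx).diff]
      exact pd_congr 0 (nE2 l i k)
    have d5 := sd_pd0_comm k (hSA k x hx) (hSg l i x hx)
    have d6 := E6 x hx l i
    have d7 : aco A k x = -pd 0 (A k) x := rfl
    linear_combination d1 - d2 - d2' - d3 - d3' - d4 + d5
      + aco A k x * d6 + pd 0 (gb l i) x * d7
  exact ⟨ha, hb, hc⟩
end
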